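/- Let n_u be the total number of users, t the number of corrupted users with 0 < t ≤ n_u, n an even group size with n ≤ t and n/2 ≤ n_u - t, and n_g = ⌊n_u/n⌋ ≥ 1. Then the probability (1/n_g) · C(t, n/2)·C(n_u - t, n/2) / C(n_u, n) is at most (2^n/n_g) · ((n_u - t)/t)^(n/2) · (t/n_u)^n. -/

import Mathlib

/-!
With `k = n / 2`, `u = n_u - t` and `N = t + u`, one has
`C(t,k) C(u,k) / C(N,2k) = (2k)! / k!² · t⋯(t-k+1) · u⋯(u-k+1) / (N⋯(N-2k+1))`, and
`(2k)! / (4^k k!²)` is the product of the ratios `(m - 1) / m` over even `m = 2k - 2i`.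
Comparing with `(4tu / N²)^k`, pair the `i`-th factors from the top: then
`(t - i)(u - i) N² ≤ t u (N - 2i)²` and `(m - 1) / m ≤ (N - 2i - 1) / (N - 2i)` because
`m ≤ N - 2i`, so every factor of the quotient is at most `1`. Finally
`2^n ((N - t)/t)^k (t/N)^n = (4tu/N²)^k`.
-/

open Finset Nat

namespace Nat

theorem descFactorial_two_mul (n k : ℕ) :
    n.descFactorial (2 * k) = ∏ i ∈ range k, (n - 2 * i) * (n - 2 * i - 1) := by
  induction k with
  | zero => simp
  | succ k ih =>
    rw [mul_add_one, descFactorial_succ, descFactorial_succ, ih, prod_range_succ, ← Nat.sub_sub]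
    ring

theorem factorial_two_mul_eq_prod (k : ℕ) :
    (2 * k)! = ∏ i ∈ range k, (2 * k - 2 * i) * (2 * k - 2 * i - 1) := by
  rw [← descFactorial_self, descFactorial_two_mul]

theorem four_pow_mul_factorial_sq (k : ℕ) :
    4 ^ k * k ! ^ 2 = ∏ i ∈ range k, (2 * k - 2 * i) ^ 2 := by
  rw [show 4 ^ k = (2 ^ k) ^ 2 by rw [← pow_mul, pow_mul']; rfl]
  simp only [← Nat.mul_sub, mul_pow, prod_mul_distrib, prod_pow, prod_const, card_range,
    ← descFactorial_eq_prod_range, descFactorial_self]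

theorem sub_mul_sub_mul_sq_le {t u i : ℕ} (hit : i ≤ t) (hiu : i ≤ u) :
    (t - i) * (u - i) * (t + u) ^ 2 ≤ t * u * (t + u - 2 * i) ^ 2 := by
  have h2i : 2 * i ≤ t + u := by omega
  zify [hit, hiu, h2i]
  -- the difference of the two sides is `i * (t - u) ^ 2 * (t + u - i)`
  nlinarith [mul_nonneg (mul_nonneg (Int.natCast_nonneg i) (sq_nonneg ((t : ℤ) - u)))
    (by omega : (0 : ℤ) ≤ t + u - i)]

theorem sub_one_mul_le_mul_sub_one {m s : ℕ} (hms : m ≤ s) : (m - 1) * s ≤ m * (s - 1) := by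
  rcases m with _ | m
  · simp
  · rcases s with _ | s
    · omega
    · simp only [Nat.add_sub_cancel]
      nlinarith

theorem factorial_mul_descFactorial_mul_descFactorial_le {k t u : ℕ} (hkt : k ≤ t)
    (hku : k ≤ u) :
    (2 * k)! * t.descFactorial k * u.descFactorial k * (t + u) ^ (2 * k)
      ≤ 4 ^ k * k ! ^ 2 * (t * u) ^ k * (t + u).descFactorial (2 * k) := by
  have hL : (2 * k)! * t.descFactorial k * u.descFactorial k * (t + u) ^ (2 * k)
      = ∏ i ∈ range k, (2 * k - 2 * i) * (2 * k - 2 * i - 1) *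
          ((t - i) * (u - i) * (t + u) ^ 2) := by
    simp only [factorial_two_mul_eq_prod, descFactorial_eq_prod_range, prod_mul_distrib,
      prod_const, card_range, pow_mul]
    ring
  have hR : 4 ^ k * k ! ^ 2 * (t * u) ^ k * (t + u).descFactorial (2 * k)
      = ∏ i ∈ range k, (2 * k - 2 * i) ^ 2 * (t * u) *
          ((t + u - 2 * i) * (t + u - 2 * i - 1)) := by
    simp only [four_pow_mul_factorial_sq, descFactorial_two_mul, prod_mul_distrib, prod_const,
      card_range, mul_pow]
  rw [hL, hR]
  refine prod_le_prod' fun i hi => ?_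
  have hik := mem_range.mp hi
  set m := 2 * k - 2 * i
  set s := t + u - 2 * i
  calc m * (m - 1) * ((t - i) * (u - i) * (t + u) ^ 2)
      ≤ m * (m - 1) * (t * u * s ^ 2) :=
        Nat.mul_le_mul_left _ (sub_mul_sub_mul_sq_le (by omega) (by omega))
    _ = m * (t * u) * s * ((m - 1) * s) := by ring
    _ ≤ m * (t * u) * s * (m * (s - 1)) :=
        Nat.mul_le_mul_left _ (sub_one_mul_le_mul_sub_one (by omega))
    _ = m ^ 2 * (t * u) * (s * (s - 1)) := by ring

theorem choose_mul_choose_mul_pow_le {k t u : ℕ} (hkt : k ≤ t) (hku : k ≤ u) :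
    t.choose k * u.choose k * (t + u) ^ (2 * k) ≤ 4 ^ k * (t * u) ^ k * (t + u).choose (2 * k) := by
  have h := factorial_mul_descFactorial_mul_descFactorial_le hkt hku
  simp only [descFactorial_eq_factorial_mul_choose] at h
  refine Nat.le_of_mul_le_mul_left ?_ (by positivity : 0 < (2 * k)! * k ! ^ 2)
  convert h using 1 <;> ring

end Nat

theorem choose_mul_choose_div_choose_le {k t u : ℕ} (hkt : k ≤ t) (hku : k ≤ u) :
    (t.choose k * u.choose k : ℝ) / (t + u).choose (2 * k) ≤ (4 * t * u / (t + u) ^ 2) ^ k := by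
  rcases k.eq_zero_or_pos with rfl | hk
  · simp
  have hN : (0 : ℝ) < t + u := by norm_cast; omega
  have hC : (0 : ℝ) < (t + u).choose (2 * k) := by norm_cast; exact choose_pos (by omega)
  have h : ((t.choose k * u.choose k * (t + u) ^ (2 * k) : ℕ) : ℝ)
      ≤ ((4 ^ k * (t * u) ^ k * (t + u).choose (2 * k) : ℕ) : ℝ) := by
    exact_mod_cast choose_mul_choose_mul_pow_le hkt hku
  push_cast at h
  rw [div_pow, ← pow_mul, mul_assoc, mul_pow, div_le_div_iff₀ hC (by positivity)]
  exact h

theorem malicious_group_prob_bound_general (n_u t n : ℕ)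
    (ht : 0 < t) (htu : t ≤ n_u) (hn : Even n) (hnt : n ≤ t)
    (hhalf : n / 2 ≤ n_u - t) :
    (1 / ((n_u / n : ℕ) : ℝ)) *
      (((t.choose (n / 2) : ℝ) * ((n_u - t).choose (n / 2) : ℝ)) / (n_u.choose n : ℝ)) ≤
    ((2 : ℝ) ^ n / ((n_u / n : ℕ) : ℝ)) *
      (((n_u : ℝ) - (t : ℝ)) / (t : ℝ)) ^ (n / 2) * ((t : ℝ) / (n_u : ℝ)) ^ n := by
  obtain ⟨k, rfl⟩ := hn.two_dvd
  obtain ⟨u, rfl⟩ := Nat.exists_eq_add_of_le htu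
  simp only [Nat.mul_div_cancel_left k two_pos, Nat.add_sub_cancel_left] at hhalf ⊢
  push_cast
  have hbase : (2 : ℝ) ^ 2 * (u / t) * (t / (t + u)) ^ 2 = 4 * t * u / (t + u) ^ 2 := by
    field_simp
    ring
  calc _ ≤ 1 / (((t + u) / (2 * k) : ℕ) : ℝ) * (4 * t * u / (t + u) ^ 2) ^ k := by
        gcongr
        exact choose_mul_choose_div_choose_le (by omega) hhalf
    _ = _ := by
        rw [add_sub_cancel_left, ← hbase, pow_mul, pow_mul, mul_pow, mul_pow]
        ring

/-- Probability bound for maliciously generated groups (Lemma in the paper). -/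
theorem malicious_group_prob_bound (n_u t n : ℕ)
    (ht : 0 < t) (htu : t ≤ n_u) (hn : Even n) (hnt : n ≤ t)
    (hhalf : n / 2 ≤ n_u - t) (hg : 1 ≤ n_u / n) :
    (1 / ((n_u / n : ℕ) : ℝ)) *
      (((t.choose (n / 2) : ℝ) * ((n_u - t).choose (n / 2) : ℝ)) / (n_u.choose n : ℝ)) ≤
    ((2 : ℝ) ^ n / ((n_u / n : ℕ) : ℝ)) *
      (((n_u : ℝ) - (t : ℝ)) / (t : ℝ)) ^ (n / 2) * ((t : ℝ) / (n_u : ℝ)) ^ n :=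
  malicious_group_prob_bound_general n_u t n ht htu hn hnt hhalf
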